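/- arXiv:1211.3583 — 10 statements merged into one kernel-verified Lean document; each statement's English description precedes it below -/
import Mathlib

section
/- Let S : ℝ → ℂ satisfy S(x)·S(−x) = 1 for all x ∈ ℝ. Then for every n ∈ ℕ, all permutations σ, ρ of {1,…,n}, and all θ ∈ ℝⁿ, the composition law S^{σ∘ρ}(θ) = S^{σ}(θ) · S^{ρ}(θ^{σ}) holds, where (σ∘ρ)(i) = σ(ρ(i)). -/
/-!
Write `S^σ(θ) = ∏_{i<j} c(σ i, σ j)` with `c(x, y) = S(θ_x − θ_y)` if `y < x` and `1` otherwise.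
Since `S(x) S(−x) = 1`, `c(σ x, σ y) = c(σ (min x y), σ (max x y)) · c'(x, y)`, where `c'` is `c`
for `θ^σ`. The first factor is symmetric in `x, y`, so its product over the pairs `(ρ i, ρ j)`,
`i < j`, is a product over unordered pairs and does not see `ρ`; it equals `S^σ(θ)`, while the
product of the second factor is `S^ρ(θ^σ)`.
-/

/-- The S-factor `S^σ(θ) = ∏_{i<j, σ(i)>σ(j)} S(θ_{σ(i)} − θ_{σ(j)})`. -/
noncomputable def Sperm (S : ℝ → ℂ) {n : ℕ} (σ : Equiv.Perm (Fin n)) (θ : Fin n → ℝ) : ℂ :=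
  ∏ p ∈ Finset.univ.filter (fun p : Fin n × Fin n => p.1 < p.2 ∧ σ p.2 < σ p.1),
    S (θ (σ p.1) - θ (σ p.2))

open Finset

theorem Finset.prod_filter_lt_eq_prod_filter_not_isDiag {ι M : Type*} [LinearOrder ι] [Fintype ι]
    [CommMonoid M] (f : Sym2 ι → M) :
    ∏ p ∈ univ.filter (fun p : ι × ι => p.1 < p.2), f s(p.1, p.2) =
      ∏ z ∈ univ.filter (fun z : Sym2 ι => ¬ z.IsDiag), f z := by
  have := sum_sym2_filter_not_isDiag (M := Additive M) univ (fun z => Additive.ofMul (f z))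
  have hlt : univ.offDiag.filter (fun p : ι × ι => p.1 < p.2) =
      univ.filter (fun p => p.1 < p.2) := by
    ext p; simpa using ne_of_lt
  rw [sym2_univ, hlt] at this
  apply_fun Additive.toMul at this
  simpa [toMul_sum] using this.symm

theorem Finset.prod_filter_lt_perm_apply_of_symm {ι M : Type*} [LinearOrder ι] [Fintype ι]
    [CommMonoid M] (ρ : Equiv.Perm ι) (f : ι → ι → M) (hf : ∀ a b, f a b = f b a) :
    ∏ p ∈ univ.filter (fun p : ι × ι => p.1 < p.2), f (ρ p.1) (ρ p.2) =
      ∏ p ∈ univ.filter (fun p : ι × ι => p.1 < p.2), f p.1 p.2 := by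
  let F : Sym2 ι → M := Sym2.lift ⟨f, hf⟩
  have hmap : ∏ z ∈ univ.filter (fun z : Sym2 ι => ¬ z.IsDiag), F (z.map ρ) =
      ∏ z ∈ univ.filter (fun z : Sym2 ι => ¬ z.IsDiag), F z :=
    prod_nbij' (Sym2.map ρ) (Sym2.map ρ.symm) (by simp [Sym2.isDiag_map ρ.injective])
      (by simp [Sym2.isDiag_map ρ.symm.injective]) (by simp [Sym2.map_map])
      (by simp [Sym2.map_map]) (fun _ _ => rfl)
  rwa [← prod_filter_lt_eq_prod_filter_not_isDiag, ← prod_filter_lt_eq_prod_filter_not_isDiag]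
    at hmap

section InversionFactor

variable {α : Type*} [LinearOrder α] (S : ℝ → ℂ) (θ : α → ℝ)

noncomputable def inversionFactor (x y : α) : ℂ :=
  if y < x then S (θ x - θ y) else 1

variable {S}

theorem inversionFactor_swap (hS : ∀ x : ℝ, S x * S (-x) = 1) {x y : α} (hxy : x ≠ y) :
    inversionFactor S θ x y = inversionFactor S θ y x * S (θ x - θ y) := by
  rcases hxy.lt_or_gt with h | h
  · rw [inversionFactor, inversionFactor, if_neg h.not_gt, if_pos h, ← neg_sub, mul_comm, hS]
  · rw [inversionFactor, inversionFactor, if_pos h, if_neg h.not_gt, one_mul]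

theorem inversionFactor_perm_apply (hS : ∀ x : ℝ, S x * S (-x) = 1) (σ : Equiv.Perm α)
    (x y : α) :
    inversionFactor S θ (σ x) (σ y) =
      inversionFactor S θ (σ (min x y)) (σ (max x y)) *
        inversionFactor S (fun i => θ (σ i)) x y := by
  rcases lt_trichotomy x y with h | rfl | h
  · have hnoinv : inversionFactor S (fun i => θ (σ i)) x y = 1 := if_neg h.not_gt
    rw [min_eq_left h.le, max_eq_right h.le, hnoinv, mul_one]
  · simp [inversionFactor]
  · have hinv : inversionFactor S (fun i => θ (σ i)) x y = S (θ (σ x) - θ (σ y)) := if_pos h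
    rw [min_eq_right h.le, max_eq_left h.le, hinv,
      inversionFactor_swap θ hS (σ.injective.ne h.ne')]

end InversionFactor

theorem sperm_eq_prod_inversionFactor (S : ℝ → ℂ) {n : ℕ} (σ : Equiv.Perm (Fin n))
    (θ : Fin n → ℝ) :
    Sperm S σ θ = ∏ p ∈ univ.filter (fun p : Fin n × Fin n => p.1 < p.2),
      inversionFactor S θ (σ p.1) (σ p.2) := by
  rw [Sperm, ← filter_filter, prod_filter]
  rfl

/-- Composition law `S^{σ∘ρ}(θ) = S^σ(θ) · S^ρ(θ^σ)`. -/
theorem sperm_composition (S : ℝ → ℂ) (hS : ∀ x : ℝ, S x * S (-x) = 1) (n : ℕ)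
    (σ ρ : Equiv.Perm (Fin n)) (θ : Fin n → ℝ) :
    Sperm S (σ * ρ) θ = Sperm S σ θ * Sperm S ρ (fun i => θ (σ i)) := by
  set c := inversionFactor S θ
  have hsymm : ∀ a b, c (σ (min a b)) (σ (max a b)) = c (σ (min b a)) (σ (max b a)) := by
    intro a b; rw [min_comm, max_comm]
  simp only [sperm_eq_prod_inversionFactor, Equiv.Perm.mul_apply]
  calc ∏ p ∈ univ.filter (fun p : Fin n × Fin n => p.1 < p.2), c (σ (ρ p.1)) (σ (ρ p.2))
      = ∏ p ∈ univ.filter (fun p : Fin n × Fin n => p.1 < p.2),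
          c (σ (min (ρ p.1) (ρ p.2))) (σ (max (ρ p.1) (ρ p.2))) *
            inversionFactor S (fun i => θ (σ i)) (ρ p.1) (ρ p.2) :=
        prod_congr rfl fun p _ => inversionFactor_perm_apply θ hS σ (ρ p.1) (ρ p.2)
    _ = (∏ p ∈ univ.filter (fun p : Fin n × Fin n => p.1 < p.2),
          c (σ (min p.1 p.2)) (σ (max p.1 p.2))) *
          ∏ p ∈ univ.filter (fun p : Fin n × Fin n => p.1 < p.2),
            inversionFactor S (fun i => θ (σ i)) (ρ p.1) (ρ p.2) := by
        rw [prod_mul_distrib, prod_filter_lt_perm_apply_of_symm ρ _ hsymm]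
    _ = _ := by
        congr 1
        refine prod_congr rfl fun p hp => ?_
        have hle : p.1 ≤ p.2 := (mem_filter.mp hp).2.le
        rw [min_eq_left hle, max_eq_right hle]
end

section
/- Let S : ℝ → ℂ satisfy S(x)·S(−x) = 1 for all x ∈ ℝ, let n ∈ ℕ, and for f : ℝⁿ → ℂ define the S-symmetrization (Sym_S f)(θ) := (1/n!) Σ_{σ ∈ S_n} S^σ(θ) f(θ^σ). Then for every f : ℝⁿ → ℂ: (a) Sym_S(Sym_S f) = Sym_S f (Sym_S is idempotent), and (b) Sym_S f is S-symmetric, i.e. for every permutation π of {1,…,n} and all θ ∈ ℝⁿ, (Sym_S f)(θ) = S^π(θ) · (Sym_S f)(θ^π). -/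
/-- The S-symmetrization `(Sym_S f)(θ) = (1/n!) Σ_σ S^σ(θ) f(θ^σ)`. -/
noncomputable def SymS (S : ℝ → ℂ) {n : ℕ} (f : (Fin n → ℝ) → ℂ) : (Fin n → ℝ) → ℂ :=
  fun θ => (1 / (n.factorial : ℂ)) *
    ∑ σ : Equiv.Perm (Fin n), Sperm S σ θ * f (fun i => θ (σ i))

open Finset

theorem Finset.prod_lt_pairs_comp_perm_of_symm {α M : Type*} [Fintype α] [LinearOrder α]
    [CommMonoid M]
    (K : α → α → M) (hK : ∀ a b, K a b = K b a) (σ : Equiv.Perm α) :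
    ∏ p ∈ univ.filter (fun p : α × α => p.1 < p.2), K (σ p.1) (σ p.2) =
      ∏ p ∈ univ.filter (fun p : α × α => p.1 < p.2), K p.1 p.2 := by
  refine prod_nbij' (fun p => (min (σ p.1) (σ p.2), max (σ p.1) (σ p.2)))
    (fun q => (min (σ.symm q.1) (σ.symm q.2), max (σ.symm q.1) (σ.symm q.2))) ?_ ?_ ?_ ?_ ?_
  · simp only [mem_filter_univ]
    exact fun p hp => min_lt_max.2 (σ.injective.ne hp.ne)
  · simp only [mem_filter_univ]
    exact fun q hq => min_lt_max.2 (σ.symm.injective.ne hq.ne)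
  · simp only [mem_filter_univ]
    intro p hp
    rcases le_total (σ p.1) (σ p.2) with h | h <;> simp [h, hp.le]
  · simp only [mem_filter_univ]
    intro q hq
    rcases le_total (σ.symm q.1) (σ.symm q.2) with h | h <;> simp [h, hq.le]
  · intro p _
    rcases le_total (σ p.1) (σ p.2) with h | h <;> simp [h, hK]

noncomputable def invFactor (S : ℝ → ℂ) {α : Type*} [LinearOrder α] (θ : α → ℝ) (a b : α) : ℂ :=
  if b < a then S (θ a - θ b) else 1

theorem sperm_eq_prod_invFactor (S : ℝ → ℂ) {n : ℕ} (σ : Equiv.Perm (Fin n)) (θ : Fin n → ℝ) :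
    Sperm S σ θ = ∏ p ∈ univ.filter (fun p : Fin n × Fin n => p.1 < p.2),
      invFactor S θ (σ p.1) (σ p.2) := by
  rw [Sperm, ← filter_filter, prod_filter]
  rfl

theorem invFactor_comp {S : ℝ → ℂ} (hS : ∀ x, S x * S (-x) = 1) {α β : Type*} [LinearOrder α]
    [LinearOrder β] {π : α → β} (hπ : Function.Injective π) (θ : β → ℝ) {a b : α} (hab : a ≠ b) :
    invFactor S θ (π a) (π b) =
      invFactor S θ (π (min a b)) (π (max a b)) * invFactor S (θ ∘ π) a b := by
  rcases hab.lt_or_gt with hlt | hgt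
  · simp [invFactor, hlt.le, hlt.not_gt]
  · have hne : π a ≠ π b := hπ.ne hab
    rcases hne.lt_or_gt with hπlt | hπgt
    · have hinv := hS (θ (π b) - θ (π a))
      rw [neg_sub] at hinv
      simp [invFactor, hgt, hgt.le, hπlt, hπlt.not_gt, hinv]
    · simp [invFactor, hgt, hgt.le, hπgt, hπgt.not_gt]

/-- The `π`-part of each factor only depends on the unordered pair `{σ i, σ j}`, so its product
over all pairs does not depend on `σ`. -/
theorem sperm_mul {S : ℝ → ℂ} (hS : ∀ x, S x * S (-x) = 1) {n : ℕ}
    (π σ : Equiv.Perm (Fin n)) (θ : Fin n → ℝ) :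
    Sperm S (π * σ) θ = Sperm S π θ * Sperm S σ (fun i => θ (π i)) := by
  set K : Fin n → Fin n → ℂ := fun a b => invFactor S θ (π (min a b)) (π (max a b))
  have hK : ∀ a b, K a b = K b a := fun a b => by simp only [K, min_comm, max_comm]
  calc Sperm S (π * σ) θ
      = ∏ p ∈ univ.filter (fun p : Fin n × Fin n => p.1 < p.2),
          K (σ p.1) (σ p.2) * invFactor S (θ ∘ π) (σ p.1) (σ p.2) := by
        rw [sperm_eq_prod_invFactor]
        refine prod_congr rfl fun p hp => ?_
        exact invFactor_comp hS π.injective θ (σ.injective.ne (mem_filter_univ p |>.1 hp).ne)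
    _ = (∏ p ∈ univ.filter (fun p : Fin n × Fin n => p.1 < p.2), K p.1 p.2) *
          Sperm S σ (fun i => θ (π i)) := by
        rw [prod_mul_distrib, prod_lt_pairs_comp_perm_of_symm K hK, sperm_eq_prod_invFactor]
        rfl
    _ = Sperm S π θ * Sperm S σ (fun i => θ (π i)) := by
        rw [sperm_eq_prod_invFactor S π θ]
        congr 1
        refine prod_congr rfl fun p hp => ?_
        have hp : p.1 ≤ p.2 := (mem_filter_univ p |>.1 hp).le
        simp only [K, min_eq_left hp, max_eq_right hp]

def IsSSymmetric (S : ℝ → ℂ) {n : ℕ} (g : (Fin n → ℝ) → ℂ) : Prop :=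
  ∀ (π : Equiv.Perm (Fin n)) (θ : Fin n → ℝ), g θ = Sperm S π θ * g (fun i => θ (π i))

theorem isSSymmetric_symS {S : ℝ → ℂ} (hS : ∀ x, S x * S (-x) = 1) {n : ℕ}
    (f : (Fin n → ℝ) → ℂ) : IsSSymmetric S (SymS S f) := by
  intro π θ
  calc SymS S f θ
      = 1 / (n.factorial : ℂ) *
          ∑ σ, Sperm S (π * σ) θ * f (fun i => θ ((π * σ) i)) := by
        rw [SymS, ← Equiv.sum_comp (Equiv.mulLeft π)]
        rfl
    _ = Sperm S π θ * SymS S f (fun i => θ (π i)) := by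
        rw [SymS, mul_left_comm]
        congr 1
        rw [mul_sum]
        simp only [sperm_mul hS, Equiv.Perm.mul_apply, mul_assoc]

theorem IsSSymmetric.symS_eq {S : ℝ → ℂ} {n : ℕ} {g : (Fin n → ℝ) → ℂ}
    (hg : IsSSymmetric S g) : SymS S g = g := by
  funext θ
  have hn : (n.factorial : ℂ) ≠ 0 := Nat.cast_ne_zero.2 n.factorial_ne_zero
  have hterm (σ : Equiv.Perm (Fin n)) : Sperm S σ θ * g (fun i => θ (σ i)) = g θ := (hg σ θ).symm
  simp only [SymS, hterm, sum_const, card_univ, Fintype.card_perm, Fintype.card_fin, nsmul_eq_mul]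
  field_simp

/-- `Sym_S` is idempotent and its image consists of S-symmetric functions. -/
theorem symS_idempotent_and_symmetric (S : ℝ → ℂ) (hS : ∀ x : ℝ, S x * S (-x) = 1)
    (n : ℕ) (f : (Fin n → ℝ) → ℂ) :
    SymS S (SymS S f) = SymS S f ∧
    ∀ (π : Equiv.Perm (Fin n)) (θ : Fin n → ℝ),
      SymS S f θ = Sperm S π θ * SymS S f (fun i => θ (π i)) :=
  ⟨(isSSymmetric_symS hS f).symS_eq, isSSymmetric_symS hS f⟩
end

section
/- Let 0 < α < 1, set ω(p) := p^α·cos(απ/2) for p ≥ 0 and ϖ(z) := e^{−iαπ/2}·(z+i)^α, where (·)^α is the principal complex power. Then: (i) ω is monotone increasing on [0,∞) and subadditive, i.e. ω(p+q) ≤ ω(p) + ω(q) for all p,q ≥ 0; (ii) ∫₀^∞ ω(p)/(1+p²) dp < ∞; (iii) Re ϖ(p) = Re ϖ(−p) for all real p; (iv) for all z ∈ ℂ with Im z ≥ 0 one has ω(|z|) ≤ Re ϖ(z), and there exist constants c, d > 0 such that Re ϖ(z) ≤ c·ω(|z|) + d for all such z. -/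
/-!
Multiplying by `e^{-iαπ/2} = (-i)^α` rotates: `ϖ z = (1 - i z)^α`, and for `Im z ≥ 0` the point
`1 - i z` lies in the closed right half-plane, where `|arg| ≤ π/2`. Hence
`Re ϖ z = ‖1 - i z‖^α cos(α arg(1 - i z))` lies between `‖1 - i z‖^α cos(απ/2)` and
`‖1 - i z‖^α`, and `‖z‖ ≤ ‖1 - i z‖ ≤ ‖z‖ + 1` together with the subadditivity of `t ↦ t^α`
gives both bounds. For real `p`, `1 + i p` is the conjugate of `1 - i p`, and conjugation commutes
with the principal power off the negative axis, whence the symmetry. Integrability follows from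
`p^α / (1 + p²) = O(p^{α-2})`.
-/

open MeasureTheory

open Filter Real in
theorem integrableOn_Ici_rpow_div_one_add_sq {α : ℝ} (hα₀ : 0 ≤ α) (hα₁ : α < 1) :
    IntegrableOn (fun p : ℝ => p ^ α / (1 + p ^ 2)) (Set.Ici 0) := by
  have hcont : ContinuousOn (fun p : ℝ => p ^ α / (1 + p ^ 2)) (Set.Ici 0) :=
    ((continuous_rpow_const hα₀).continuousOn.div (by fun_prop)) fun p _ => by positivity
  refine (hcont.locallyIntegrableOn measurableSet_Ici).integrableOn_of_isBigO_atTop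
    (g := fun p => p ^ (α - 2)) ?_ (integrableAtFilter_rpow_atTop_iff.mpr (by linarith))
  refine Asymptotics.IsBigO.of_bound 1 ?_
  filter_upwards [eventually_gt_atTop 0] with p hp
  rw [norm_of_nonneg (by positivity), norm_of_nonneg (by positivity), one_mul,
    rpow_sub hp, rpow_two]
  exact div_le_div_of_nonneg_left (by positivity) (by positivity) (by linarith)

namespace Complex

theorem exp_neg_mul_I_mul_cpow {w : ℂ} (hw : 0 ≤ w.im) (α : ℂ) :
    exp (-(I * α * Real.pi / 2)) * w ^ α = (-I * w) ^ α := by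
  rcases eq_or_ne w 0 with rfl | hw₀
  · rcases eq_or_ne α 0 with rfl | hα <;> simp [*]
  have harg : arg (-I) + arg w ∈ Set.Ioc (-Real.pi) Real.pi := by
    rw [arg_neg_I]
    constructor <;> linarith [Real.pi_pos, arg_nonneg_iff.mpr hw, arg_le_pi w]
  rw [cpow_def_of_ne_zero hw₀, cpow_def_of_ne_zero (mul_ne_zero (neg_ne_zero.mpr I_ne_zero) hw₀),
    log_mul (neg_ne_zero.mpr I_ne_zero) hw₀ harg, log_neg_I, ← exp_add]
  ring_nf

theorem re_cpow_conj {x : ℂ} (hx : x.arg ≠ Real.pi) (α : ℝ) :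
    ((starRingEnd ℂ) x ^ (α : ℂ)).re = (x ^ (α : ℂ)).re := by
  rw [conj_cpow _ _ hx, conj_ofReal, conj_re]

theorem re_cpow_ofReal_le (x : ℂ) (α : ℝ) : (x ^ (α : ℂ)).re ≤ ‖x‖ ^ α :=
  norm_cpow_real x α ▸ re_le_norm _

theorem rpow_norm_mul_cos_le_re_cpow {x : ℂ} (hx : 0 ≤ x.re) {α : ℝ} (hα₀ : 0 ≤ α) (hα₁ : α ≤ 1) :
    ‖x‖ ^ α * Real.cos (α * Real.pi / 2) ≤ (x ^ (α : ℂ)).re := by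
  rw [cpow_ofReal_re]
  refine mul_le_mul_of_nonneg_left ?_ (by positivity)
  have harg : |arg x| ≤ Real.pi / 2 := abs_arg_le_pi_div_two_iff.mpr hx
  rw [← Real.cos_abs (arg x * α), abs_mul, abs_of_nonneg hα₀]
  refine Real.cos_le_cos_of_nonneg_of_le_pi (by positivity) (by nlinarith [Real.pi_pos]) ?_
  nlinarith [abs_nonneg (arg x)]

theorem norm_le_norm_one_sub_I_mul {z : ℂ} (hz : 0 ≤ z.im) : ‖z‖ ≤ ‖1 - I * z‖ := by
  rw [← sq_le_sq₀ (norm_nonneg _) (norm_nonneg _), Complex.sq_norm, Complex.sq_norm, normSq_apply,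
    normSq_apply]
  simp only [sub_re, sub_im, one_re, one_im, mul_re, mul_im, I_re, I_im]
  nlinarith

theorem norm_one_sub_I_mul_le (z : ℂ) : ‖1 - I * z‖ ≤ ‖z‖ + 1 := by
  simpa [add_comm] using norm_sub_le (1 : ℂ) (I * z)

end Complex

/-- The fractional-power example `ω(p) = p^α·cos(απ/2)`, `ϖ(z) = e^{−iαπ/2}·(z+i)^α` is an
analytic indicatrix. -/
theorem power_indicatrix (α : ℝ) (hα₀ : 0 < α) (hα₁ : α < 1)
    (ω : ℝ → ℝ) (hω : ∀ p : ℝ, ω p = p ^ α * Real.cos (α * Real.pi / 2))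
    (ϖ : ℂ → ℂ)
    (hϖ : ∀ z : ℂ, ϖ z =
      Complex.exp (-(Complex.I * (α : ℂ) * (Real.pi : ℂ) / 2)) * (z + Complex.I) ^ (α : ℂ)) :
    MonotoneOn ω (Set.Ici 0) ∧
    (∀ p q : ℝ, 0 ≤ p → 0 ≤ q → ω (p + q) ≤ ω p + ω q) ∧
    IntegrableOn (fun p : ℝ => ω p / (1 + p ^ 2)) (Set.Ici 0) ∧
    (∀ p : ℝ, (ϖ (p : ℂ)).re = (ϖ (-(p : ℂ))).re) ∧
    (∀ z : ℂ, 0 ≤ z.im → ω ‖z‖ ≤ (ϖ z).re) ∧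
    (∃ c d : ℝ, 0 < c ∧ 0 < d ∧ ∀ z : ℂ, 0 ≤ z.im →
      (ϖ z).re ≤ c * ω ‖z‖ + d) := by
  set κ := Real.cos (α * Real.pi / 2)
  have hκ : 0 < κ :=
    Real.cos_pos_of_mem_Ioo ⟨by nlinarith [Real.pi_pos], by nlinarith [Real.pi_pos]⟩
  obtain rfl : ω = fun p => p ^ α * κ := funext hω
  have hrot : ∀ z : ℂ, 0 ≤ z.im → ϖ z = (1 - Complex.I * z) ^ (α : ℂ) := fun z hz => by
    rw [hϖ, Complex.exp_neg_mul_I_mul_cpow (by simp; linarith)]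
    congr 1
    linear_combination -Complex.I_sq
  refine ⟨fun p hp q _ hpq => mul_le_mul_of_nonneg_right (Real.rpow_le_rpow hp hpq hα₀.le) hκ.le,
    fun p q hp hq => ?_, ?_, fun p => ?_, fun z hz => ?_, ⟨κ⁻¹, 1, by positivity, one_pos,
    fun z hz => ?_⟩⟩
  · rw [← add_mul]
    exact mul_le_mul_of_nonneg_right (Real.rpow_add_le_add_rpow hp hq hα₀.le hα₁.le) hκ.le
  · simp only [mul_div_right_comm]
    exact (integrableOn_Ici_rpow_div_one_add_sq hα₀.le hα₁).mul_const κ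
  · have hconj : 1 - Complex.I * (-(p : ℂ)) = (starRingEnd ℂ) (1 - Complex.I * p) := by simp
    have harg : Complex.arg (1 - Complex.I * p) ≠ Real.pi :=
      (Complex.arg_lt_pi_iff.mpr (Or.inl (by simp))).ne
    rw [hrot p (by simp), hrot (-p) (by simp), hconj, Complex.re_cpow_conj harg]
  · rw [hrot z hz]
    calc ‖z‖ ^ α * κ ≤ ‖1 - Complex.I * z‖ ^ α * κ := by
          gcongr; exact Complex.norm_le_norm_one_sub_I_mul hz
      _ ≤ _ := Complex.rpow_norm_mul_cos_le_re_cpow (by simp; linarith) hα₀.le hα₁.le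
  · rw [hrot z hz]
    calc _ ≤ ‖1 - Complex.I * z‖ ^ α := Complex.re_cpow_ofReal_le _ _
      _ ≤ (‖z‖ + 1) ^ α := by gcongr; exact Complex.norm_one_sub_I_mul_le z
      _ ≤ ‖z‖ ^ α + 1 := by
          simpa using Real.rpow_add_le_add_rpow (norm_nonneg z) zero_le_one hα₀.le hα₁.le
      _ = κ⁻¹ * (‖z‖ ^ α * κ) + 1 := by field_simp
end

section
/- For every k ∈ ℕ there exists a constant c > 0 such that for all ζ ∈ ℂ^{2k+1} with Im ζ₁ < Im ζ₂ < ⋯ < Im ζ_{2k+1} < Im ζ₁ + π: |T_{2k+1}(ζ)| ≤ c · (∏_{1 ≤ i < j ≤ 2k+1} |ζ_i − ζ_j + iπ|^{−1}) · exp(Σ_{j=1}^{2k+1} |Re ζ_j|). -/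
/-- The antisymmetric building block
`T_m(ζ) = (1/(2^k k!)) Σ_{σ ∈ S_m} sgn(σ) ∏_{j=1}^{k} tanh((ζ_{σ(2j−1)} − ζ_{σ(2j)})/2)`,
with `k = ⌊m/2⌋`. -/
noncomputable def T (m : ℕ) (ζ : Fin m → ℂ) : ℂ :=
  (1 / ((2 ^ (m / 2) : ℂ) * ((m / 2).factorial : ℂ))) *
    ∑ σ : Equiv.Perm (Fin m), ((Equiv.Perm.sign σ : ℤ) : ℂ) *
      ∏ j : Fin (m / 2),
        Complex.tanh ((ζ (σ ⟨2 * (j : ℕ), by have := j.isLt; omega⟩) -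
          ζ (σ ⟨2 * (j : ℕ) + 1, by have := j.isLt; omega⟩)) / 2)

/-!
Each term of `T_{2k+1}` is a product of `tanh ((ζ_a - ζ_b) / 2)` over `k` disjoint pairs
`{a, b}`, and since `tanh` is odd its norm only depends on the pair `i < j`. On the tube,
`z = ζ_i - ζ_j` has `-π < Im z < 0`, and there
`‖tanh (z/2)‖ ≤ 1 + 1/‖cosh (z/2)‖ ≤ 1 + π/‖z + iπ‖`, because in this closed strip `cosh (z/2)`
vanishes only at the simple zero `z = -iπ`. The weight `2π (1 + |Re z|) / ‖z + iπ‖` dominates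
this bound and is at least `1`, so every term is at most the product of the weights over all
pairs `i < j`. Finally `1 + |x_i - x_j| ≤ d · exp ((|x_i| + |x_j|) / d)` with `d = 2(2k+1) + 1`,
and each index lies in fewer than `d / 2` pairs, so the numerators contribute at most
`d^#pairs · exp (Σ |Re ζ_j|)`.
-/

open Complex Finset
open scoped Real

lemma norm_cosh_sq (w : ℂ) :
    ‖cosh w‖ ^ 2 = Real.sinh w.re ^ 2 + Real.cos w.im ^ 2 := by
  have h : cosh w = ((Real.cosh w.re * Real.cos w.im : ℝ) : ℂ) +
      ((Real.sinh w.re * Real.sin w.im : ℝ) : ℂ) * I := by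
    conv_lhs => rw [← re_add_im w]
    rw [cosh_add, cosh_mul_I, sinh_mul_I, ← ofReal_cosh, ← ofReal_sinh, ← ofReal_cos,
      ← ofReal_sin]
    push_cast
    ring
  rw [Complex.sq_norm, h, normSq_add_mul_I]
  linear_combination Real.cos w.im ^ 2 * Real.cosh_sq w.re +
    Real.sinh w.re ^ 2 * Real.sin_sq_add_cos_sq w.im

lemma norm_sinh_sq (w : ℂ) :
    ‖sinh w‖ ^ 2 = Real.sinh w.re ^ 2 + Real.sin w.im ^ 2 := by
  have h : sinh w = ((Real.sinh w.re * Real.cos w.im : ℝ) : ℂ) +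
      ((Real.cosh w.re * Real.sin w.im : ℝ) : ℂ) * I := by
    conv_lhs => rw [← re_add_im w]
    rw [sinh_add, cosh_mul_I, sinh_mul_I, ← ofReal_cosh, ← ofReal_sinh, ← ofReal_cos,
      ← ofReal_sin]
    push_cast
    ring
  rw [Complex.sq_norm, h, normSq_add_mul_I]
  linear_combination Real.sin w.im ^ 2 * Real.cosh_sq w.re +
    Real.sinh w.re ^ 2 * Real.sin_sq_add_cos_sq w.im

-- At a zero of `cosh`, `tanh w = sinh w / 0 = 0`.
lemma norm_tanh_le_one_add_inv_norm_cosh (w : ℂ) : ‖tanh w‖ ≤ 1 + ‖cosh w‖⁻¹ := by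
  rw [tanh_eq_sinh_div_cosh, norm_div]
  rcases (norm_nonneg (cosh w)).eq_or_lt with h | h
  · simp [← h]
  have hsq : ‖sinh w‖ ^ 2 ≤ (‖cosh w‖ + 1) ^ 2 := by
    nlinarith [norm_sinh_sq w, norm_cosh_sq w, Real.sin_sq_le_one w.im,
      sq_nonneg (Real.cos w.im)]
  rw [div_le_iff₀ h, add_mul, one_mul, inv_mul_cancel₀ h.ne']
  exact pow_le_pow_iff_left₀ (norm_nonneg _) (by positivity) two_ne_zero |>.mp hsq

lemma sq_le_sinh_sq (x : ℝ) : x ^ 2 ≤ Real.sinh x ^ 2 :=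
  sq_le_sq.mpr <| by rw [Real.abs_sinh]; exact Real.self_le_sinh_iff.mpr (abs_nonneg x)

lemma norm_add_pi_mul_I_le_pi_mul_norm_cosh_half {z : ℂ} (h₁ : -π ≤ z.im) (h₂ : z.im ≤ 0) :
    ‖z + π * I‖ ≤ π * ‖cosh (z / 2)‖ := by
  have hre : (z / 2).re = z.re / 2 := by simp
  have him : (z / 2).im = z.im / 2 := by simp
  have hcos : z.im + π ≤ π * Real.cos (z.im / 2) := by
    -- Jordan's inequality `2t/π ≤ sin t` at `t = z.im / 2 + π / 2`
    have hjordan := Real.mul_le_sin (x := z.im / 2 + π / 2) (by linarith) (by linarith)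
    rw [Real.sin_add_pi_div_two] at hjordan
    field_simp at hjordan
    linarith
  have hsinh : z.re ^ 2 ≤ π ^ 2 * Real.sinh (z.re / 2) ^ 2 := by
    have hπ : 4 ≤ π ^ 2 := by nlinarith [Real.pi_gt_three]
    calc z.re ^ 2 ≤ π ^ 2 * (z.re / 2) ^ 2 := by nlinarith [sq_nonneg z.re]
      _ ≤ π ^ 2 * Real.sinh (z.re / 2) ^ 2 :=
          mul_le_mul_of_nonneg_left (sq_le_sinh_sq _) (by positivity)
  have hsq : ‖z + π * I‖ ^ 2 ≤ (π * ‖cosh (z / 2)‖) ^ 2 := by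
    rw [mul_pow, norm_cosh_sq, hre, him, Complex.sq_norm, normSq_apply]
    simp only [add_re, add_im, mul_re, mul_im, ofReal_re, ofReal_im, I_re, I_im]
    nlinarith
  exact pow_le_pow_iff_left₀ (norm_nonneg _) (by positivity) two_ne_zero |>.mp hsq

lemma norm_add_pi_mul_I_pos {z : ℂ} (h : -π < z.im) : 0 < ‖z + π * I‖ :=
  norm_pos_iff.mpr fun h0 => by
    have := congrArg im h0
    simp only [add_im, mul_im, ofReal_re, ofReal_im, I_re, I_im, zero_im] at this
    linarith

lemma norm_add_pi_mul_I_le {z : ℂ} (h₁ : -π ≤ z.im) (h₂ : z.im ≤ 0) :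
    ‖z + π * I‖ ≤ |z.re| + π := by
  refine (norm_le_abs_re_add_abs_im _).trans ?_
  simp only [add_re, add_im, mul_re, mul_im, ofReal_re, ofReal_im, I_re, I_im, mul_zero,
    mul_one, sub_zero, add_zero]
  rw [abs_of_nonneg (a := z.im + _) (by linarith)]
  linarith

lemma norm_tanh_half_le {z : ℂ} (h₁ : -π < z.im) (h₂ : z.im ≤ 0) :
    ‖tanh (z / 2)‖ ≤ 2 * π * (1 + |z.re|) * ‖z + π * I‖⁻¹ := by
  have hD := norm_add_pi_mul_I_pos h₁
  have hcosh := norm_add_pi_mul_I_le_pi_mul_norm_cosh_half h₁.le h₂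
  have hcosh_pos : 0 < π * ‖cosh (z / 2)‖ := hD.trans_le hcosh
  have hre := norm_add_pi_mul_I_le h₁.le h₂
  calc ‖tanh (z / 2)‖ ≤ 1 + ‖cosh (z / 2)‖⁻¹ := norm_tanh_le_one_add_inv_norm_cosh _
    _ = 1 + π * (π * ‖cosh (z / 2)‖)⁻¹ := by
        rw [mul_inv, ← mul_assoc, mul_inv_cancel₀ Real.pi_ne_zero, one_mul]
    _ ≤ 1 + π * ‖z + π * I‖⁻¹ := by gcongr
    _ = (‖z + π * I‖ + π) * ‖z + π * I‖⁻¹ := by field_simp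
    _ ≤ 2 * π * (1 + |z.re|) * ‖z + π * I‖⁻¹ := by
        gcongr
        nlinarith [Real.pi_gt_three, abs_nonneg z.re]

lemma one_le_two_pi_mul_one_add_abs_re_mul_inv {z : ℂ} (h₁ : -π < z.im) (h₂ : z.im ≤ 0) :
    1 ≤ 2 * π * (1 + |z.re|) * ‖z + π * I‖⁻¹ := by
  have hD := norm_add_pi_mul_I_pos h₁
  rw [← div_eq_mul_inv, one_le_div hD]
  nlinarith [norm_add_pi_mul_I_le h₁.le h₂, Real.pi_gt_three, abs_nonneg z.re]

lemma one_add_le_mul_exp_div (t : ℝ) {d : ℝ} (hd : 1 ≤ d) : 1 + t ≤ d * Real.exp (t / d) :=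
  calc 1 + t ≤ d * (t / d + 1) := by field_simp; linarith
    _ ≤ d * Real.exp (t / d) := by gcongr; exact Real.add_one_le_exp _

lemma prod_one_add_abs_sub_le {ι : Type*} [Fintype ι] (S : Finset (ι × ι)) (x : ι → ℝ) :
    ∏ p ∈ S, (1 + |x p.1 - x p.2|) ≤
      (2 * Fintype.card ι + 1 : ℝ) ^ #S * Real.exp (∑ i, |x i|) := by
  set d : ℝ := 2 * Fintype.card ι + 1
  have hd : 1 ≤ d := by simp [d]
  have hsum : ∑ p ∈ S, (|x p.1| + |x p.2|) ≤ d * ∑ i, |x i| :=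
    calc ∑ p ∈ S, (|x p.1| + |x p.2|) ≤ ∑ p : ι × ι, (|x p.1| + |x p.2|) :=
          sum_le_sum_of_subset_of_nonneg (subset_univ S) fun _ _ _ => by positivity
      _ = 2 * Fintype.card ι * ∑ i, |x i| := by
          simp only [Fintype.sum_prod_type, sum_add_distrib, sum_const, card_univ, nsmul_eq_mul,
            ← mul_sum]
          ring
      _ ≤ d * ∑ i, |x i| := by gcongr; simp [d]
  calc ∏ p ∈ S, (1 + |x p.1 - x p.2|)
      ≤ ∏ p ∈ S, d * Real.exp ((|x p.1| + |x p.2|) / d) :=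
        prod_le_prod (fun _ _ => by positivity) fun p _ =>
          (add_le_add_right (abs_sub (x p.1) (x p.2)) 1).trans (one_add_le_mul_exp_div _ hd)
    _ = d ^ #S * Real.exp ((∑ p ∈ S, (|x p.1| + |x p.2|)) / d) := by
        rw [prod_mul_distrib, prod_const, ← Real.exp_sum, sum_div]
    _ ≤ d ^ #S * Real.exp (∑ i, |x i|) := by
        gcongr
        rw [div_le_iff₀ (by linarith)]
        linarith

lemma prod_le_prod_filter_lt {ι κ : Type*} [LinearOrder ι] [Fintype ι] [Fintype κ]
    {F : ι → ι → ℝ} {w : ι × ι → ℝ} (hF_symm : ∀ i j, F i j = F j i)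
    (hF_nonneg : ∀ i j, 0 ≤ F i j) (hFw : ∀ i j, i < j → F i j ≤ w (i, j))
    (hw : ∀ i j, i < j → 1 ≤ w (i, j)) {a b : κ → ι} (hab : ∀ l, a l ≠ b l)
    (hinj : Function.Injective fun l => s(a l, b l)) :
    ∏ l, F (a l) (b l) ≤ ∏ p ∈ univ.filter (fun p : ι × ι => p.1 < p.2), w p := by
  set φ : κ → ι × ι := fun l => (min (a l) (b l), max (a l) (b l))
  have hφ_lt : ∀ l, (φ l).1 < (φ l).2 := fun l => min_lt_max.mpr (hab l)
  have hφ_sym2 : ∀ l, s((φ l).1, (φ l).2) = s(a l, b l) := fun l => by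
    rcases le_total (a l) (b l) with h | h <;> simp [φ, h, Sym2.eq_swap]
  have hF_φ : ∀ l, F (a l) (b l) = F (φ l).1 (φ l).2 := fun l => by
    rcases le_total (a l) (b l) with h | h <;> simp [φ, h, hF_symm (a l)]
  have hφ_inj : Function.Injective φ := fun l l' h => hinj <| by
    simpa only [hφ_sym2] using congrArg (fun p : ι × ι => s(p.1, p.2)) h
  calc ∏ l, F (a l) (b l) = ∏ l, F (φ l).1 (φ l).2 := prod_congr rfl fun l _ => hF_φ l
    _ ≤ ∏ l, w (φ l) := prod_le_prod (fun _ _ => hF_nonneg _ _) fun l _ => hFw _ _ (hφ_lt l)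
    _ = ∏ p ∈ univ.image φ, w p := (prod_image fun _ _ _ _ h => hφ_inj h).symm
    _ ≤ ∏ p ∈ univ.filter (fun p : ι × ι => p.1 < p.2), w p := by
        refine prod_le_prod_of_subset_of_one_le
          (image_subset_iff.mpr fun l _ => mem_filter.mpr ⟨mem_univ _, hφ_lt l⟩)
          (forall_mem_image.mpr fun l _ => zero_le_one.trans (hw _ _ (hφ_lt l)))
          fun p hp _ => hw _ _ (mem_filter.mp hp).2

-- The positions `2j, 2j + 1` (0-based) paired in the definition of `T m`.
def pairFst (m : ℕ) (j : Fin (m / 2)) : Fin m := ⟨2 * j, by omega⟩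

def pairSnd (m : ℕ) (j : Fin (m / 2)) : Fin m := ⟨2 * j + 1, by omega⟩

lemma pairFst_ne_pairSnd (m : ℕ) (j : Fin (m / 2)) : pairFst m j ≠ pairSnd m j := by
  simp [pairFst, pairSnd, Fin.ext_iff]

lemma sym2_pairFst_pairSnd_injective (m : ℕ) :
    Function.Injective fun j => s(pairFst m j, pairSnd m j) := by
  intro j j' h
  simp only [Sym2.eq_iff, pairFst, pairSnd, Fin.ext_iff] at h
  ext
  omega

lemma norm_T_le (m : ℕ) (ζ : Fin m → ℂ) :
    ‖T m ζ‖ ≤ ∑ σ : Equiv.Perm (Fin m),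
      ∏ j, ‖tanh ((ζ (σ (pairFst m j)) - ζ (σ (pairSnd m j))) / 2)‖ := by
  have hcoeff : ‖1 / ((2 ^ (m / 2) : ℂ) * ((m / 2).factorial : ℂ))‖ ≤ 1 := by
    rw [norm_div, norm_one, norm_mul, norm_pow, Complex.norm_two, Complex.norm_natCast]
    exact div_le_one_of_le₀ (one_le_mul_of_one_le_of_one_le (one_le_pow₀ one_le_two)
      (Nat.one_le_cast.mpr (Nat.factorial_pos _))) (by positivity)
  rw [T, norm_mul]
  refine (mul_le_of_le_one_left (norm_nonneg _) hcoeff).trans <| (norm_sum_le _ _).trans <|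
    sum_le_sum fun σ _ => ?_
  have hsign : ‖((Equiv.Perm.sign σ : ℤ) : ℂ)‖ = 1 := by
    rcases Int.units_eq_one_or (Equiv.Perm.sign σ) with h | h <;> simp [h]
  rw [norm_mul, norm_prod, hsign, one_mul]
  rfl

lemma im_sub_mem_Ioo_neg_pi_zero {n : ℕ} {ζ : Fin (n + 1) → ℂ}
    (hmono : StrictMono fun i => (ζ i).im) (hlast : (ζ (Fin.last n)).im < (ζ 0).im + π)
    {i j : Fin (n + 1)} (hij : i < j) :
    (ζ i - ζ j).im ∈ Set.Ioo (-π) 0 := by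
  have h0i : (ζ 0).im ≤ (ζ i).im := hmono.monotone (Fin.zero_le i)
  have hjl : (ζ j).im ≤ (ζ (Fin.last n)).im := hmono.monotone (Fin.le_last j)
  have hij' : (ζ i).im < (ζ j).im := hmono hij
  rw [sub_im]
  exact ⟨by linarith, by linarith⟩

/-- Pointwise bound for `T_{2k+1}` on the tube
`Im ζ₁ < ⋯ < Im ζ_{2k+1} < Im ζ₁ + π`. -/
theorem T_pointwise_bound (k : ℕ) :
    ∃ c : ℝ, 0 < c ∧ ∀ ζ : Fin (2 * k + 1) → ℂ,
      (∀ i j : Fin (2 * k + 1), i < j → (ζ i).im < (ζ j).im) →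
      (ζ (Fin.last (2 * k))).im < (ζ 0).im + Real.pi →
      ‖T (2 * k + 1) ζ‖ ≤
        c * (∏ p ∈ Finset.univ.filter
              (fun p : Fin (2 * k + 1) × Fin (2 * k + 1) => p.1 < p.2),
              ‖ζ p.1 - ζ p.2 + Real.pi * Complex.I‖⁻¹) *
          Real.exp (∑ j : Fin (2 * k + 1), |(ζ j).re|) := by
  set S := univ.filter fun p : Fin (2 * k + 1) × Fin (2 * k + 1) => p.1 < p.2
  set C : ℝ := 2 * π * (2 * Fintype.card (Fin (2 * k + 1)) + 1)
  refine ⟨(2 * k + 1).factorial * C ^ #S, by positivity, fun ζ hmono hlast => ?_⟩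
  have hpair : ∀ i j, i < j → (ζ i - ζ j).im ∈ Set.Ioo (-π) 0 :=
    fun i j hij => im_sub_mem_Ioo_neg_pi_zero hmono hlast hij
  set P := ∏ p ∈ S, ‖ζ p.1 - ζ p.2 + π * I‖⁻¹
  set E := Real.exp (∑ j, |(ζ j).re|)
  set w : Fin (2 * k + 1) × Fin (2 * k + 1) → ℝ :=
    fun p => 2 * π * (1 + |(ζ p.1 - ζ p.2).re|) * ‖ζ p.1 - ζ p.2 + π * I‖⁻¹
  have hσ : ∀ σ : Equiv.Perm (Fin (2 * k + 1)),
      ∏ j, ‖tanh ((ζ (σ (pairFst _ j)) - ζ (σ (pairSnd _ j))) / 2)‖ ≤ ∏ p ∈ S, w p :=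
    fun σ => prod_le_prod_filter_lt (F := fun i j => ‖tanh ((ζ i - ζ j) / 2)‖)
      (fun i j => by rw [← neg_sub, neg_div, tanh_neg, norm_neg])
      (fun _ _ => norm_nonneg _)
      (fun i j hij => norm_tanh_half_le (hpair i j hij).1 (hpair i j hij).2.le)
      (fun i j hij =>
        one_le_two_pi_mul_one_add_abs_re_mul_inv (hpair i j hij).1 (hpair i j hij).2.le)
      (fun j => σ.injective.ne (pairFst_ne_pairSnd _ j))
      ((Sym2.map.injective σ.injective).comp (sym2_pairFst_pairSnd_injective _))
  have hw : ∏ p ∈ S, w p ≤ C ^ #S * P * E :=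
    calc ∏ p ∈ S, w p = (2 * π) ^ #S * (∏ p ∈ S, (1 + |(ζ p.1).re - (ζ p.2).re|)) * P := by
          simp only [w, P, prod_mul_distrib, prod_const, sub_re, mul_pow]
      _ ≤ (2 * π) ^ #S * ((2 * Fintype.card (Fin (2 * k + 1)) + 1) ^ #S * E) * P := by
          gcongr
          exact prod_one_add_abs_sub_le S fun i => (ζ i).re
      _ = C ^ #S * P * E := by rw [mul_pow _ (_ + _)]; ring
  calc ‖T (2 * k + 1) ζ‖ ≤ ∑ σ : Equiv.Perm (Fin (2 * k + 1)), ∏ p ∈ S, w p :=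
        (norm_T_le _ ζ).trans (sum_le_sum fun σ _ => hσ σ)
    _ = (2 * k + 1).factorial * ∏ p ∈ S, w p := by
        rw [sum_const, card_univ, Fintype.card_perm, Fintype.card_fin, nsmul_eq_mul]
    _ ≤ (2 * k + 1).factorial * (C ^ #S * P * E) := by gcongr
    _ = _ := by ring
end

section
/- There exists a constant c > 0 such that for every z ∈ ℂ with −π ≤ Im z ≤ 0 and cosh(z/2) ≠ 0: |(z + iπ) · tanh(z/2)| ≤ c·(|Re z| + 1). -/
/-!
Put `v = (z + iπ) / 2`, so that `tanh (z / 2) = tanh (v - iπ/2) = cosh v / sinh v` and the quantity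
to bound is `2 v cosh v / sinh v`, with `|Im v| ≤ π/2`. There Jordan's inequality `|y| ≤ (π/2) |sin y|`,
together with `|x| ≤ |sinh x|`, gives `|v| ≤ (π/2) |sinh v|`, while `|cosh v| ≤ |sinh v| + 1` holds
everywhere. Hence `|2 v cosh v / sinh v| ≤ 2 |v| + π ≤ |Re z| + 2π`.
-/

namespace Real

lemma abs_le_abs_sinh (x : ℝ) : |x| ≤ |sinh x| := by
  rw [abs_sinh]
  exact self_le_sinh_iff.2 (abs_nonneg x)

lemma abs_le_pi_div_two_mul_abs_sin {x : ℝ} (hx : |x| ≤ π / 2) : |x| ≤ π / 2 * |sin x| := by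
  have := mul_abs_le_abs_sin hx
  rw [div_mul_eq_mul_div, div_le_iff₀ pi_pos] at this
  linarith

end Real

open scoped Real

namespace Complex

lemma sinh_eq_re_im (z : ℂ) :
    sinh z = (Real.sinh z.re * Real.cos z.im : ℝ) + (Real.cosh z.re * Real.sin z.im : ℝ) * I := by
  conv_lhs => rw [← re_add_im z]
  rw [sinh_add, cosh_mul_I, sinh_mul_I, ← ofReal_cosh, ← ofReal_sinh, ← ofReal_cos, ← ofReal_sin]
  push_cast
  ring

lemma cosh_eq_re_im (z : ℂ) :
    cosh z = (Real.cosh z.re * Real.cos z.im : ℝ) + (Real.sinh z.re * Real.sin z.im : ℝ) * I := by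
  conv_lhs => rw [← re_add_im z]
  rw [cosh_add, cosh_mul_I, sinh_mul_I, ← ofReal_cosh, ← ofReal_sinh, ← ofReal_cos, ← ofReal_sin]
  push_cast
  ring

lemma norm_sinh_sq (z : ℂ) : ‖sinh z‖ ^ 2 = Real.sinh z.re ^ 2 + Real.sin z.im ^ 2 := by
  rw [Complex.sq_norm, sinh_eq_re_im, normSq_add_mul_I]
  linear_combination Real.sin z.im ^ 2 * Real.cosh_sq z.re +
    Real.sinh z.re ^ 2 * Real.sin_sq_add_cos_sq z.im

lemma norm_cosh_sq (z : ℂ) : ‖cosh z‖ ^ 2 = Real.sinh z.re ^ 2 + Real.cos z.im ^ 2 := by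
  rw [Complex.sq_norm, cosh_eq_re_im, normSq_add_mul_I]
  linear_combination Real.cos z.im ^ 2 * Real.cosh_sq z.re +
    Real.sinh z.re ^ 2 * Real.sin_sq_add_cos_sq z.im

lemma norm_cosh_le_norm_sinh_add_one (z : ℂ) : ‖cosh z‖ ≤ ‖sinh z‖ + 1 := by
  refine (pow_le_pow_iff_left₀ (norm_nonneg _) (by positivity) two_ne_zero).1 ?_
  rw [add_sq, norm_cosh_sq, norm_sinh_sq]
  nlinarith [Real.cos_sq_le_one z.im, sq_nonneg (Real.sin z.im), norm_nonneg (sinh z)]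

lemma norm_le_pi_div_two_mul_norm_sinh {z : ℂ} (hz : |z.im| ≤ π / 2) :
    ‖z‖ ≤ π / 2 * ‖sinh z‖ := by
  refine (pow_le_pow_iff_left₀ (norm_nonneg _) (by positivity) two_ne_zero).1 ?_
  have hre : z.re ^ 2 ≤ Real.sinh z.re ^ 2 := sq_le_sq.2 (Real.abs_le_abs_sinh z.re)
  have him : z.im ^ 2 ≤ (π / 2) ^ 2 * Real.sin z.im ^ 2 := by
    simpa [mul_pow, sq_abs] using
      pow_le_pow_left₀ (abs_nonneg _) (Real.abs_le_pi_div_two_mul_abs_sin hz) 2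
  have hpi : 1 ≤ (π / 2) ^ 2 := one_le_pow₀ (by linarith [Real.two_le_pi])
  rw [mul_pow, norm_sinh_sq, Complex.sq_norm, normSq_apply]
  nlinarith [sq_nonneg (Real.sinh z.re)]

lemma tanh_sub_pi_div_two_mul_I (z : ℂ) : tanh (z - π / 2 * I) = cosh z / sinh z := by
  rw [tanh_eq_sinh_div_cosh, sub_eq_add_neg, sinh_add, cosh_add, ← neg_mul, sinh_mul_I, cosh_mul_I,
    cos_neg, sin_neg, cos_pi_div_two, sin_pi_div_two]
  simpa using mul_div_mul_right (cosh z) (sinh z) (neg_ne_zero.2 I_ne_zero)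

lemma norm_mul_cosh_div_sinh_le {z : ℂ} (hz : |z.im| ≤ π / 2) :
    ‖z * (cosh z / sinh z)‖ ≤ ‖z‖ + π / 2 :=
  calc ‖z * (cosh z / sinh z)‖ = ‖z‖ * ‖cosh z‖ / ‖sinh z‖ := by rw [norm_mul, norm_div, mul_div_assoc]
    _ ≤ ‖z‖ * (‖sinh z‖ + 1) / ‖sinh z‖ := by gcongr; exact norm_cosh_le_norm_sinh_add_one z
    _ ≤ ‖z‖ + π / 2 := div_le_of_le_mul₀ (norm_nonneg _) (by positivity) <| by
      linarith [norm_le_pi_div_two_mul_norm_sinh hz]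

end Complex

/-- On the strip `−π ≤ Im z ≤ 0` one has `|(z+iπ)·tanh(z/2)| ≤ c·(|Re z|+1)`. -/
theorem tanh_strip_bound :
    ∃ c : ℝ, 0 < c ∧ ∀ z : ℂ, -Real.pi ≤ z.im → z.im ≤ 0 →
      Complex.cosh (z / 2) ≠ 0 →
      ‖(z + Real.pi * Complex.I) * Complex.tanh (z / 2)‖ ≤
        c * (|z.re| + 1) := by
  refine ⟨2 * π, by positivity, fun z him_lo him_hi _ => ?_⟩
  set v := (z + π * Complex.I) / 2 with hv
  have hv_re : v.re = z.re / 2 := by simp [hv]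
  have hv_im : v.im = (z.im + π) / 2 := by simp [hv]
  have hv_strip : |v.im| ≤ π / 2 := by
    rw [hv_im, abs_le]; constructor <;> linarith
  have hv_norm : ‖v‖ ≤ |z.re| / 2 + π / 2 := by
    have := Complex.norm_le_abs_re_add_abs_im v
    rw [hv_re, abs_div, abs_two] at this
    linarith
  have h_coth : (z + π * Complex.I) * Complex.tanh (z / 2) =
      2 * (v * (Complex.cosh v / Complex.sinh v)) := by
    rw [← Complex.tanh_sub_pi_div_two_mul_I, hv]
    ring_nf
  calc ‖(z + π * Complex.I) * Complex.tanh (z / 2)‖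
        = 2 * ‖v * (Complex.cosh v / Complex.sinh v)‖ := by rw [h_coth, norm_mul, Complex.norm_two]
    _ ≤ 2 * (|z.re| / 2 + π / 2 + π / 2) := by
        gcongr; exact (Complex.norm_mul_cosh_div_sinh_le hv_strip).trans (by gcongr)
    _ ≤ 2 * π * (|z.re| + 1) := by nlinarith [Real.two_le_pi, abs_nonneg z.re]
end

section
/- Let μ > 0, r > 0, and let g : ℝ → ℂ be integrable with support contained in [−r, r]. Then for all ζ₁, ζ₂ ∈ ℂ: |sinh((ζ₁ − ζ₂)/2)| · |∫_ℝ g(x) · e^{iμ(cosh ζ₁ + cosh ζ₂)x} dx| ≤ 2‖g‖₁ · cosh(Re ζ₁) · cosh(Re ζ₂) · exp( μ r (|Im sinh ζ₁| + |Im sinh ζ₂|) ). -/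
/-!
The prefactor is handled through the exponential form of `sinh`, which gives
`‖sinh w‖ ≤ cosh (re w)`, together with `cosh (a - b) ≤ 2 cosh a cosh b`.
For the integral, `|x| ≤ r` on the support of `g`, so `|exp (z x)| ≤ exp (r |re z|)` there.
Here `re z = -μ im (cosh ζ₁ + cosh ζ₂)`, and `|im (cosh ζ)| = |sinh (re ζ) sin (im ζ)|`
is dominated by `|im (sinh ζ)| = |cosh (re ζ) sin (im ζ)|`.
-/

open MeasureTheory

namespace Real

theorem abs_sinh_le_cosh (x : ℝ) : |sinh x| ≤ cosh x :=
  (abs_sinh x).trans_le <| (sinh_lt_cosh |x|).le.trans_eq (cosh_abs x)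

theorem cosh_sub_le_two_mul_cosh_mul_cosh (a b : ℝ) : cosh (a - b) ≤ 2 * cosh a * cosh b := by
  have h : |sinh a * sinh b| ≤ cosh a * cosh b := by
    rw [abs_mul]
    exact mul_le_mul (abs_sinh_le_cosh a) (abs_sinh_le_cosh b) (abs_nonneg _) (cosh_pos a).le
  rw [cosh_sub]
  linarith [neg_abs_le (sinh a * sinh b)]

end Real

namespace Complex

theorem norm_sinh_le_cosh_re (z : ℂ) : ‖sinh z‖ ≤ Real.cosh z.re := by
  rw [sinh, Real.cosh_eq, norm_div, RCLike.norm_ofNat, ← norm_exp, ← neg_re, ← norm_exp]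
  gcongr
  exact norm_sub_le _ _

theorem sinh_im (z : ℂ) : (sinh z).im = Real.cosh z.re * Real.sin z.im := by
  conv_lhs => rw [← re_add_im z]
  rw [sinh_add, sinh_mul_I, cosh_mul_I, ← ofReal_sinh, ← ofReal_cosh, ← ofReal_sin, ← ofReal_cos]
  simp only [add_im, mul_im, ofReal_re, ofReal_im, I_re, I_im]
  ring

theorem cosh_im (z : ℂ) : (cosh z).im = Real.sinh z.re * Real.sin z.im := by
  conv_lhs => rw [← re_add_im z]
  rw [cosh_add, sinh_mul_I, cosh_mul_I, ← ofReal_sinh, ← ofReal_cosh, ← ofReal_sin, ← ofReal_cos]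
  simp only [add_im, mul_im, ofReal_re, ofReal_im, I_re, I_im]
  ring

theorem abs_cosh_im_le_abs_sinh_im (z : ℂ) : |(cosh z).im| ≤ |(sinh z).im| := by
  rw [cosh_im, sinh_im, abs_mul, abs_mul, abs_of_pos (Real.cosh_pos z.re)]
  gcongr
  exact Real.abs_sinh_le_cosh z.re

theorem norm_sinh_half_sub_le (z w : ℂ) :
    ‖sinh ((z - w) / 2)‖ ≤ 2 * Real.cosh z.re * Real.cosh w.re := by
  have hre : ((z - w) / 2).re = (z.re - w.re) / 2 := by simp
  calc ‖sinh ((z - w) / 2)‖ ≤ Real.cosh ((z.re - w.re) / 2) := hre ▸ norm_sinh_le_cosh_re _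
    _ ≤ Real.cosh (z.re - w.re) := by
      rw [Real.cosh_le_cosh, abs_div, abs_two]
      linarith [abs_nonneg (z.re - w.re)]
    _ ≤ 2 * Real.cosh z.re * Real.cosh w.re := Real.cosh_sub_le_two_mul_cosh_mul_cosh _ _

end Complex

theorem norm_integral_mul_cexp_le {g : ℝ → ℂ} {r a : ℝ} (hg : Integrable g)
    (hsupp : Function.support g ⊆ Set.Icc (-r) r) {z : ℂ} (hz : |z.re| ≤ a) :
    ‖∫ x : ℝ, g x * Complex.exp (z * x)‖ ≤ Real.exp (a * r) * ∫ x : ℝ, ‖g x‖ := by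
  rw [← integral_const_mul]
  refine norm_integral_le_of_norm_le (hg.norm.const_mul _) (ae_of_all _ fun x => ?_)
  by_cases hx : g x = 0
  · simp [hx]
  have hxr : |x| ≤ r := abs_le.mpr (hsupp hx)
  rw [norm_mul, Complex.norm_exp, Complex.re_mul_ofReal, mul_comm ‖g x‖]
  refine mul_le_mul_of_nonneg_right (Real.exp_le_exp.mpr ?_) (norm_nonneg _)
  calc z.re * x ≤ |z.re| * |x| := (le_abs_self _).trans_eq (abs_mul _ _)
    _ ≤ a * r := mul_le_mul hz hxr (abs_nonneg _) ((abs_nonneg _).trans hz)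

theorem buchholz_summers_pointwise_bound_general (μ r : ℝ) (hμ : 0 < μ)
    (g : ℝ → ℂ) (hg : Integrable g)
    (hsupp : Function.support g ⊆ Set.Icc (-r) r)
    (ζ₁ ζ₂ : ℂ) :
    ‖Complex.sinh ((ζ₁ - ζ₂) / 2)‖ *
      ‖∫ x : ℝ, g x *
        Complex.exp (Complex.I * (μ : ℂ) * (Complex.cosh ζ₁ + Complex.cosh ζ₂) * (x : ℂ))‖ ≤
    2 * (∫ x : ℝ, ‖g x‖) * Real.cosh ζ₁.re * Real.cosh ζ₂.re *
      Real.exp (μ * r * (|(Complex.sinh ζ₁).im| + |(Complex.sinh ζ₂).im|)) := by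
  set S := |(Complex.sinh ζ₁).im| + |(Complex.sinh ζ₂).im|
  have hre : |(Complex.I * μ * (Complex.cosh ζ₁ + Complex.cosh ζ₂)).re| ≤ μ * S := by
    have hS : |(Complex.cosh ζ₁ + Complex.cosh ζ₂).im| ≤ S :=
      (abs_add_le _ _).trans <| add_le_add (Complex.abs_cosh_im_le_abs_sinh_im ζ₁)
        (Complex.abs_cosh_im_le_abs_sinh_im ζ₂)
    simpa [abs_mul, abs_of_pos hμ] using mul_le_mul_of_nonneg_left hS hμ.le
  calc _ ≤ (2 * Real.cosh ζ₁.re * Real.cosh ζ₂.re) * (Real.exp (μ * S * r) * ∫ x : ℝ, ‖g x‖) :=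
        mul_le_mul (Complex.norm_sinh_half_sub_le ζ₁ ζ₂) (norm_integral_mul_cexp_le hg hsupp hre)
          (norm_nonneg _) (by positivity)
    _ = _ := by rw [mul_right_comm μ]; ring

/-- Pointwise bound for the Buchholz–Summers-type coefficient
`F₂(ζ₁,ζ₂) = sinh((ζ₁−ζ₂)/2)·g̃(μ(cosh ζ₁ + cosh ζ₂))`. -/
theorem buchholz_summers_pointwise_bound (μ r : ℝ) (hμ : 0 < μ) (hr : 0 < r)
    (g : ℝ → ℂ) (hg : Integrable g)
    (hsupp : Function.support g ⊆ Set.Icc (-r) r)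
    (ζ₁ ζ₂ : ℂ) :
    ‖Complex.sinh ((ζ₁ - ζ₂) / 2)‖ *
      ‖∫ x : ℝ, g x *
        Complex.exp (Complex.I * (μ : ℂ) * (Complex.cosh ζ₁ + Complex.cosh ζ₂) * (x : ℂ))‖ ≤
    2 * (∫ x : ℝ, ‖g x‖) * Real.cosh ζ₁.re * Real.cosh ζ₂.re *
      Real.exp (μ * r * (|(Complex.sinh ζ₁).im| + |(Complex.sinh ζ₂).im|)) :=
  buchholz_summers_pointwise_bound_general μ r hμ g hg hsupp ζ₁ ζ₂
end

section
/- Let μ > 0, c > 0, and let G : ℝ → ℂ be measurable with |G(p)| ≤ c/(1+p²) for all p ∈ ℝ. Then the function (θ₁, θ₂) ↦ |sinh((θ₁ − θ₂)/2)|² · |G(μ(cosh θ₁ + cosh θ₂))|² is integrable on ℝ². -/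
/-!
With `A = exp |θ₁|` and `B = exp |θ₂|` one has `sinh² ((θ₁ - θ₂) / 2) ≤ A B` and
`A B ≤ (cosh θ₁ + cosh θ₂)²`, so the decay `‖G p‖ ≤ c / p²` at `p = μ (cosh θ₁ + cosh θ₂)`
bounds the integrand by `c² / μ⁴ · (A B)⁻¹ = c² / μ⁴ · exp (-|θ₁|) exp (-|θ₂|)`,
which is integrable on `ℝ²` as a product of integrable functions.
-/

open MeasureTheory Real

lemma integrable_exp_neg_abs : Integrable (fun x : ℝ => exp (-|x|)) := by
  rw [← integrableOn_univ, ← Set.Iic_union_Ioi (a := 0)]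
  refine IntegrableOn.union ?_ ?_
  · refine (integrableOn_exp_Iic 0).congr_fun (fun x hx => ?_) measurableSet_Iic
    rw [abs_of_nonpos (Set.mem_Iic.mp hx), neg_neg]
  · refine (exp_neg_integrableOn_Ioi 0 one_pos).congr_fun (fun x hx => ?_) measurableSet_Ioi
    simp [abs_of_pos (Set.mem_Ioi.mp hx)]

lemma Real.abs_sinh_le_exp_abs (x : ℝ) : |sinh x| ≤ exp |x| := by
  rw [abs_sinh, ← cosh_add_sinh]
  linarith [cosh_pos |x|]

lemma Real.exp_abs_le_two_mul_cosh (x : ℝ) : exp |x| ≤ 2 * cosh x := by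
  rw [← cosh_abs x, ← cosh_add_sinh]
  linarith [sinh_lt_cosh |x|]

lemma sq_abs_sinh_half_sub_le (a b : ℝ) : |sinh ((a - b) / 2)| ^ 2 ≤ exp |a| * exp |b| :=
  calc |sinh ((a - b) / 2)| ^ 2 ≤ exp |(a - b) / 2| ^ 2 := by
        gcongr
        exact abs_sinh_le_exp_abs _
    _ = exp |a - b| := by
        rw [← exp_nat_mul, abs_div, abs_two]
        ring_nf
    _ ≤ exp |a| * exp |b| := by
        rw [← exp_add]
        exact exp_le_exp.mpr (abs_sub a b)

lemma exp_abs_mul_exp_abs_le_sq_cosh_add (a b : ℝ) :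
    exp |a| * exp |b| ≤ (cosh a + cosh b) ^ 2 :=
  calc exp |a| * exp |b| ≤ (2 * cosh a) * (2 * cosh b) :=
        mul_le_mul (exp_abs_le_two_mul_cosh a) (exp_abs_le_two_mul_cosh b)
          (exp_pos _).le (by positivity)
    _ = 4 * cosh a * cosh b := by ring
    _ ≤ (cosh a + cosh b) ^ 2 := four_mul_le_sq_add _ _

lemma mul_sq_le_of_le_div_one_add_sq {r c p : ℝ} (hr : 0 ≤ r) (h : r ≤ c / (1 + p ^ 2)) :
    r * p ^ 2 ≤ c :=
  calc r * p ^ 2 ≤ r * (1 + p ^ 2) := by gcongr; linarith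
    _ ≤ c := (le_div_iff₀ (by positivity)).mp h

lemma sq_abs_sinh_half_sub_mul_sq_le {μ c q a b : ℝ} (hμ : μ ≠ 0) (hq : 0 ≤ q)
    (hqc : q * (μ * (cosh a + cosh b)) ^ 2 ≤ c) :
    |sinh ((a - b) / 2)| ^ 2 * q ^ 2 ≤ c ^ 2 / μ ^ 4 * (exp (-|a|) * exp (-|b|)) := by
  set W := exp |a| * exp |b| with hW
  have hW0 : 0 < W := by positivity
  have hqW : 0 ≤ q * (μ ^ 2 * W) := by positivity
  have hqWc : q * (μ ^ 2 * W) ≤ c := by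
    refine le_trans ?_ hqc
    rw [mul_pow]
    gcongr
    exact exp_abs_mul_exp_abs_le_sq_cosh_add a b
  have hrhs : c ^ 2 / μ ^ 4 * (exp (-|a|) * exp (-|b|)) = c ^ 2 / (μ ^ 4 * W) := by
    rw [exp_neg, exp_neg, hW]
    field_simp
  calc |sinh ((a - b) / 2)| ^ 2 * q ^ 2 ≤ W * q ^ 2 := by
        gcongr
        exact sq_abs_sinh_half_sub_le a b
    _ ≤ c ^ 2 / (μ ^ 4 * W) := by
        rw [le_div_iff₀ (by positivity)]
        calc W * q ^ 2 * (μ ^ 4 * W) = (q * (μ ^ 2 * W)) ^ 2 := by ring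
          _ ≤ c ^ 2 := pow_le_pow_left₀ hqW hqWc 2
    _ = c ^ 2 / μ ^ 4 * (exp (-|a|) * exp (-|b|)) := hrhs.symm

theorem f20_square_integrable_general (μ c : ℝ) (hμ : 0 < μ)
    (G : ℝ → ℂ) (hG_meas : Measurable G)
    (hG : ∀ p : ℝ, ‖G p‖ ≤ c / (1 + p ^ 2)) :
    Integrable (fun θ : ℝ × ℝ =>
      |Real.sinh ((θ.1 - θ.2) / 2)| ^ 2 *
        ‖G (μ * (Real.cosh θ.1 + Real.cosh θ.2))‖ ^ 2) := by
  have hdom : Integrable (fun θ : ℝ × ℝ => c ^ 2 / μ ^ 4 * (exp (-|θ.1|) * exp (-|θ.2|))) :=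
    (integrable_exp_neg_abs.mul_prod integrable_exp_neg_abs).const_mul _
  refine hdom.mono' ?_ (Filter.Eventually.of_forall fun θ => ?_)
  · have : Measurable fun θ : ℝ × ℝ => G (μ * (cosh θ.1 + cosh θ.2)) :=
      hG_meas.comp (by fun_prop)
    fun_prop
  · rw [norm_of_nonneg (by positivity)]
    exact sq_abs_sinh_half_sub_mul_sq_le hμ.ne' (norm_nonneg _)
      (mul_sq_le_of_le_div_one_add_sq (norm_nonneg _) (hG _))

/-- Square integrability of the coefficient `f_{2,0}(θ₁,θ₂) =
sinh((θ₁−θ₂)/2)·G(μ(cosh θ₁ + cosh θ₂))` for `G` decaying like an inverse square. -/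
theorem f20_square_integrable (μ c : ℝ) (hμ : 0 < μ) (hc : 0 < c)
    (G : ℝ → ℂ) (hG_meas : Measurable G)
    (hG : ∀ p : ℝ, ‖G p‖ ≤ c / (1 + p ^ 2)) :
    Integrable (fun θ : ℝ × ℝ =>
      |Real.sinh ((θ.1 - θ.2) / 2)| ^ 2 *
        ‖G (μ * (Real.cosh θ.1 + Real.cosh θ.2))‖ ^ 2) :=
  f20_square_integrable_general μ c hμ G hG_meas hG
end

section
/- Let S : ℂ → ℂ and define H_S(ζ) := (e^{ζ/2} + S(−ζ)·e^{−ζ/2})/(e^{ζ/2} + e^{−ζ/2}). Then: (a) if S(ζ)·S(−ζ) = 1 for all ζ ∈ ℂ, then H_S(−ζ) = S(ζ)·H_S(ζ) for every ζ with e^{ζ/2} + e^{−ζ/2} ≠ 0; (b) if S(ζ + 2πi) = S(ζ) for all ζ ∈ ℂ, then H_S(ζ + 2πi) = H_S(ζ) for every ζ with e^{ζ/2} + e^{−ζ/2} ≠ 0; (c) if S is continuous at iπ with S(iπ) = −1, then (ζ + iπ)·H_S(ζ) tends to 2 as ζ tends to −iπ with ζ ≠ −iπ. -/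
/-!
Under `ζ ↦ -ζ` the numerator of `H_S` turns into `S(ζ)` times itself once `S(ζ)S(-ζ) = 1`, and
under `ζ ↦ ζ + 2πi` both `e^{±ζ/2}` change sign, so numerator and denominator flip together.
At `ζ = -iπ` the denominator `2 cosh(ζ/2)` has a simple zero with derivative `-i`, while the
numerator tends to `e^{-iπ/2} + S(iπ) e^{iπ/2} = -2i`; the residue of `H_S` there is therefore `2`.
-/

open Complex Filter Topology
open scoped Real

theorem tendsto_sub_mul_div_of_hasDerivAt {𝕜 : Type*} [NontriviallyNormedField 𝕜]
    {N D : 𝕜 → 𝕜} {a d : 𝕜} (hN : ContinuousAt N a) (hD : HasDerivAt D d a) (hDa : D a = 0)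
    (hd : d ≠ 0) :
    Tendsto (fun z => (z - a) * (N z / D z)) (𝓝[≠] a) (𝓝 (N a / d)) := by
  refine (hN.continuousWithinAt.tendsto.div (hasDerivAt_iff_tendsto_slope.mp hD) hd).congr
    fun z => ?_
  rw [Pi.div_apply, slope_def_field, hDa, sub_zero, div_div_eq_mul_div, mul_comm (N z),
    mul_div_assoc]

noncomputable def buildingBlock (S : ℂ → ℂ) (ζ : ℂ) : ℂ :=
  (exp (ζ / 2) + S (-ζ) * exp (-(ζ / 2))) / (exp (ζ / 2) + exp (-(ζ / 2)))

theorem buildingBlock_neg {S : ℂ → ℂ} {ζ : ℂ} (hS : S ζ * S (-ζ) = 1) :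
    buildingBlock S (-ζ) = S ζ * buildingBlock S ζ := by
  rw [buildingBlock, buildingBlock, neg_div, neg_neg, neg_neg, mul_div_assoc',
    add_comm (exp (-(ζ / 2))) (exp (ζ / 2))]
  congr 1
  linear_combination -exp (-(ζ / 2)) * hS

theorem exp_half_add_two_pi_mul_I (ζ : ℂ) : exp ((ζ + 2 * π * I) / 2) = -exp (ζ / 2) := by
  rw [show (ζ + 2 * π * I) / 2 = ζ / 2 + π * I by ring, exp_add_pi_mul_I]

theorem exp_neg_half_add_two_pi_mul_I (ζ : ℂ) :
    exp (-((ζ + 2 * π * I) / 2)) = -exp (-(ζ / 2)) := by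
  rw [show -((ζ + 2 * π * I) / 2) = -(ζ / 2) - π * I by ring, exp_sub_pi_mul_I]

theorem buildingBlock_add_two_pi_mul_I {S : ℂ → ℂ} (hS : Function.Periodic S (2 * π * I))
    (ζ : ℂ) : buildingBlock S (ζ + 2 * π * I) = buildingBlock S ζ := by
  rw [buildingBlock, buildingBlock, exp_half_add_two_pi_mul_I, exp_neg_half_add_two_pi_mul_I,
    neg_add', hS.sub_eq, ← neg_div_neg_eq]
  congr 1 <;> ring

theorem tendsto_add_pi_mul_I_mul_buildingBlock {S : ℂ → ℂ} (hS : ContinuousAt S (π * I))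
    (hSπ : S (π * I) = -1) :
    Tendsto (fun ζ => (ζ + π * I) * buildingBlock S ζ) (𝓝[≠] (-(π * I))) (𝓝 2) := by
  have hexp_neg : exp (-(π * I) / 2) = -I := by
    rw [show -(π * I) / 2 = -π / 2 * I by ring, exp_neg_pi_div_two_mul_I]
  have hexp_pos : exp (-(-(π * I) / 2)) = I := by
    rw [show -(-(π * I) / 2) = π / 2 * I by ring, exp_pi_div_two_mul_I]
  have hN : ContinuousAt (fun ζ => exp (ζ / 2) + S (-ζ) * exp (-(ζ / 2))) (-(π * I)) := by
    have : ContinuousAt (fun ζ => S (-ζ)) (-(π * I)) :=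
      (neg_neg (π * I) ▸ hS).comp continuous_neg.continuousAt
    have hplus : Continuous fun ζ : ℂ => exp (ζ / 2) := by fun_prop
    have hminus : Continuous fun ζ : ℂ => exp (-(ζ / 2)) := by fun_prop
    exact hplus.continuousAt.add (this.mul hminus.continuousAt)
  have hD : HasDerivAt (fun ζ => exp (ζ / 2) + exp (-(ζ / 2))) (-I) (-(π * I)) := by
    have hplus : HasDerivAt (fun ζ : ℂ => exp (ζ / 2)) (exp (-(π * I) / 2) * (1 / 2))
        (-(π * I)) := ((hasDerivAt_id _).div_const 2).cexp
    have hminus : HasDerivAt (fun ζ : ℂ => exp (-(ζ / 2))) (exp (-(-(π * I) / 2)) * -(1 / 2))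
        (-(π * I)) := ((hasDerivAt_id _).div_const 2).neg.cexp
    exact (hplus.add hminus).congr_deriv (by rw [hexp_neg, hexp_pos]; ring)
  have hDa : exp (-(π * I) / 2) + exp (-(-(π * I) / 2)) = 0 := by
    rw [hexp_neg, hexp_pos, neg_add_cancel]
  have h := tendsto_sub_mul_div_of_hasDerivAt hN hD hDa (neg_ne_zero.2 I_ne_zero)
  rw [neg_neg, hSπ, hexp_neg, hexp_pos, show (-I + -1 * I) / -I = 2 by field_simp; ring] at h
  simpa only [buildingBlock, sub_neg_eq_add] using h

/-- Properties of the building block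
`H_S(ζ) = (e^{ζ/2} + S(−ζ)e^{−ζ/2})/(e^{ζ/2} + e^{−ζ/2})`:
(a) `H_S(−ζ) = S(ζ)·H_S(ζ)` if `S(ζ)S(−ζ) = 1`;
(b) `2πi`-periodicity of `H_S` if `S` is `2πi`-periodic;
(c) `(ζ+iπ)·H_S(ζ) → 2` as `ζ → −iπ` if `S` is continuous at `iπ` with `S(iπ) = −1`. -/
theorem HS_properties (S : ℂ → ℂ) (H : ℂ → ℂ)
    (hH : ∀ ζ : ℂ, H ζ =
      (Complex.exp (ζ / 2) + S (-ζ) * Complex.exp (-(ζ / 2))) /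
        (Complex.exp (ζ / 2) + Complex.exp (-(ζ / 2)))) :
    ((∀ ζ : ℂ, S ζ * S (-ζ) = 1) →
      ∀ ζ : ℂ, Complex.exp (ζ / 2) + Complex.exp (-(ζ / 2)) ≠ 0 →
        H (-ζ) = S ζ * H ζ) ∧
    ((∀ ζ : ℂ, S (ζ + 2 * Real.pi * Complex.I) = S ζ) →
      ∀ ζ : ℂ, Complex.exp (ζ / 2) + Complex.exp (-(ζ / 2)) ≠ 0 →
        H (ζ + 2 * Real.pi * Complex.I) = H ζ) ∧
    ((ContinuousAt S (Real.pi * Complex.I) ∧ S (Real.pi * Complex.I) = -1) →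
      Filter.Tendsto (fun ζ : ℂ => (ζ + Real.pi * Complex.I) * H ζ)
        (nhdsWithin (-(Real.pi * Complex.I)) {(-(Real.pi * Complex.I))}ᶜ)
        (nhds 2)) := by
  obtain rfl : H = buildingBlock S := funext hH
  exact ⟨fun hS ζ _ => buildingBlock_neg (hS ζ),
    fun hS ζ _ => buildingBlock_add_two_pi_mul_I hS ζ,
    fun ⟨hcont, hval⟩ => tendsto_add_pi_mul_I_mul_buildingBlock hcont hval⟩
end

section
/- Let k ≥ 1 and let Ḡ ⊆ ℝ^k be the set of all λ ∈ ℝ^k such that λ₁ ≤ λ₂ ≤ ⋯ ≤ λ_k ≤ λ₁ + 2π and at most one coordinate of λ is not an integer multiple of π. Then the interior of the convex hull of Ḡ equals {λ ∈ ℝ^k : λ₁ < λ₂ < ⋯ < λ_k < λ₁ + 2π}. -/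
/-!
The convex hull of `Ḡ` is the closed region `C = {λ₁ ≤ ⋯ ≤ λ_k ≤ λ₁ + 2π}`, and already the
points of `Ḡ` in `πℤ^k` suffice: `λ - λ₁ (1, …, 1)` is a monotone function with values in
`[0, 2π]`, hence a convex combination of monotone `{0, 2π}`-valued step functions, while
`λ₁ (1, …, 1)` lies on the segment between two consecutive diagonal points of `πℤ^k`.
The region `C` is cut out by the inequalities `λᵢ ≤ λⱼ` (`i < j`) and `λ_k ≤ λ₁ + 2π`, each of
which (except the last one when `k = 1`, which always holds) is a nontrivial half-space, so its
interior is where they hold strictly.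
-/

open Set Real

theorem sum_range_sub_mul_ite_le (G : ℕ → ℝ) (a b : ℝ) {i m : ℕ} (him : i < m) :
    ∑ j ∈ Finset.range m, (G (j + 1) - G j) * (if j ≤ i then b else a) =
      a * (G m - G 0) + (b - a) * (G (i + 1) - G 0) := by
  have hsplit (j : ℕ) : (G (j + 1) - G j) * (if j ≤ i then b else a) =
      a * (G (j + 1) - G j) + (b - a) * (if j ≤ i then G (j + 1) - G j else 0) := by
    split_ifs <;> ring
  have hfilter : (Finset.range m).filter (· ≤ i) = Finset.range (i + 1) := by
    ext j
    simp only [Finset.mem_filter, Finset.mem_range]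
    omega
  rw [Finset.sum_congr rfl fun j _ => hsplit j, Finset.sum_add_distrib, ← Finset.mul_sum,
    ← Finset.mul_sum, ← Finset.sum_filter, hfilter, Finset.sum_range_sub, Finset.sum_range_sub]

/-- The sequence `a, f 0, …, f (n - 1), b, b, …`. -/
def withEndpoints {n : ℕ} (a b : ℝ) (f : Fin n → ℝ) (j : ℕ) : ℝ :=
  if j = 0 then a else if h : j - 1 < n then f ⟨j - 1, h⟩ else b

section withEndpoints

variable {n : ℕ} {a b : ℝ} {f : Fin n → ℝ}

theorem withEndpoints_zero : withEndpoints a b f 0 = a := rfl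

theorem withEndpoints_succ (i : Fin n) : withEndpoints a b f (i + 1) = f i := by
  simp [withEndpoints]

theorem withEndpoints_of_lt {j : ℕ} (hj : n < j) : withEndpoints a b f j = b := by
  simp only [withEndpoints, dif_neg (show ¬j - 1 < n by omega), if_neg (show j ≠ 0 by omega)]

theorem monotone_withEndpoints (hab : a ≤ b) (hf : Monotone f) (hfab : range f ⊆ Icc a b) :
    Monotone (withEndpoints a b f) := by
  have hmem (j : ℕ) : withEndpoints a b f j ∈ Icc a b := by
    rcases j with _ | j
    · exact ⟨le_rfl, hab⟩
    · rcases lt_or_ge j n with hj | hj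
      · exact withEndpoints_succ ⟨j, hj⟩ ▸ hfab (mem_range_self _)
      · rw [withEndpoints_of_lt (by omega)]
        exact ⟨hab, le_rfl⟩
  refine monotone_nat_of_le_succ fun j => ?_
  rcases j with _ | j
  · exact (hmem 1).1
  · rcases lt_or_ge (j + 1) n with hj | hj
    · rw [withEndpoints_succ ⟨j, by omega⟩, withEndpoints_succ ⟨j + 1, hj⟩]
      exact hf (Fin.mk_le_mk.mpr j.le_succ)
    · exact withEndpoints_of_lt (show n < j + 2 by omega) ▸ (hmem _).2

end withEndpoints

theorem monotone_mem_convexHull_of_range_subset_Icc {n : ℕ} {a b : ℝ} (hab : a ≤ b)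
    {f : Fin n → ℝ} (hf : Monotone f) (hfab : range f ⊆ Icc a b) :
    f ∈ convexHull ℝ {g : Fin n → ℝ | Monotone g ∧ range g ⊆ {a, b}} := by
  rcases hab.eq_or_lt with rfl | hab
  · refine subset_convexHull ℝ _ ⟨hf, fun _ hx => ?_⟩
    simpa using hfab hx
  -- The increments of `G` weight the steps from `a` to `b`.
  set G := withEndpoints a b f
  have hG_zero : G 0 = a := withEndpoints_zero
  have hG_top : G (n + 1) = b := withEndpoints_of_lt n.lt_succ_self
  set w : ℕ → ℝ := fun j => (b - a)⁻¹ * (G (j + 1) - G j)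
  set step : ℕ → Fin n → ℝ := fun j i => if j ≤ i then b else a
  have hf_eq : ∑ j ∈ Finset.range (n + 1), w j • step j = f := by
    funext i
    simp only [Finset.sum_apply, Pi.smul_apply, smul_eq_mul, w, step, mul_assoc, ← Finset.mul_sum,
      sum_range_sub_mul_ite_le G a b (i.isLt.trans n.lt_succ_self), hG_zero, hG_top,
      G, withEndpoints_succ]
    field_simp [sub_ne_zero.2 hab.ne']
    ring
  rw [← hf_eq]
  refine (convex_convexHull ℝ _).sum_mem (fun j _ => ?_) ?_
    fun j _ => subset_convexHull ℝ _ ⟨?_, ?_⟩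
  · have hG_mono := monotone_withEndpoints hab.le hf hfab
    exact mul_nonneg (inv_nonneg.2 (sub_nonneg.2 hab.le)) (sub_nonneg.2 (hG_mono j.le_succ))
  · rw [← Finset.mul_sum, Finset.sum_range_sub, hG_top, hG_zero,
      inv_mul_cancel₀ (sub_ne_zero.2 hab.ne')]
  · intro i i' h
    simp only [step]
    split_ifs <;> first | omega | linarith
  · rintro _ ⟨i, rfl⟩
    simp only [step]
    split_ifs <;> simp

theorem interior_setOf_apply_le_apply_add {ι : Type*} [Finite ι] {i j : ι} (hij : i ≠ j) (c : ℝ) :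
    interior {x : ι → ℝ | x i ≤ x j + c} = {x | x i < x j + c} := by
  classical
  set ℓ : (ι → ℝ) →ₗ[ℝ] ℝ := LinearMap.proj (R := ℝ) (φ := fun _ => ℝ) i - LinearMap.proj j
  have hℓ : Function.Surjective ℓ := fun t => ⟨Pi.single i t, by simp [ℓ, hij.symm]⟩
  have hle : {x : ι → ℝ | x i ≤ x j + c} = ℓ ⁻¹' Iic c := by
    ext x
    simp [ℓ, add_comm]
  have hlt : {x : ι → ℝ | x i < x j + c} = ℓ ⁻¹' Iio c := by
    ext x
    simp [ℓ, sub_lt_iff_lt_add, add_comm]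
  rw [hle, hlt, ← interior_Iic, (ℓ.isOpenMap_of_finiteDimensional hℓ)
    |>.preimage_interior_eq_interior_preimage ℓ.continuous_of_finiteDimensional]

def graphClosure (n : ℕ) : Set (Fin (n + 1) → ℝ) :=
  {lam | Monotone lam ∧ lam (Fin.last n) ≤ lam 0 + 2 * π ∧
    {i | ¬∃ m : ℤ, lam i = m * π}.Subsingleton}

def closedAlcove (n : ℕ) : Set (Fin (n + 1) → ℝ) :=
  {lam | Monotone lam ∧ lam (Fin.last n) ≤ lam 0 + 2 * π}

def alcove (n : ℕ) : Set (Fin (n + 1) → ℝ) :=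
  {lam | StrictMono lam ∧ lam (Fin.last n) < lam 0 + 2 * π}

theorem graphClosure_subset_closedAlcove (n : ℕ) : graphClosure n ⊆ closedAlcove n :=
  fun _ h => ⟨h.1, h.2.1⟩

theorem convex_closedAlcove (n : ℕ) : Convex ℝ (closedAlcove n) := by
  rintro x ⟨hx, hx'⟩ y ⟨hy, hy'⟩ a b ha hb hab
  refine ⟨fun i j hij => ?_, ?_⟩
  · simp only [Pi.add_apply, Pi.smul_apply, smul_eq_mul]
    gcongr
    exacts [hx hij, hy hij]
  · simp only [Pi.add_apply, Pi.smul_apply, smul_eq_mul]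
    linear_combination a * hx' + b * hy' + 2 * π * hab

theorem add_smul_one_mem_graphClosure {n : ℕ} {g : Fin (n + 1) → ℝ} (hg : Monotone g)
    (hg_range : range g ⊆ {0, 2 * π}) (m : ℤ) :
    g + (m * π) • (1 : Fin (n + 1) → ℝ) ∈ graphClosure n := by
  have hval (i : Fin (n + 1)) : g i = 0 ∨ g i = 2 * π := hg_range (mem_range_self i)
  refine ⟨fun i j hij => by simpa using hg hij, ?_, fun i hi => (hi ?_).elim⟩
  · simp only [Pi.add_apply, Pi.smul_apply, Pi.one_apply, smul_eq_mul, mul_one]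
    rcases hval (Fin.last n) with h | h <;> rcases hval 0 with h' | h' <;> rw [h, h'] <;>
      linarith [pi_pos]
  · rcases hval i with h | h
    · exact ⟨m, by simp [h]⟩
    · exact ⟨m + 2, by simp [h]; ring⟩

theorem closedAlcove_subset_convexHull_graphClosure (n : ℕ) :
    closedAlcove n ⊆ convexHull ℝ (graphClosure n) := by
  rintro lam ⟨hmono, hwrap⟩
  set x := lam 0
  set m := ⌊x / π⌋
  have hsteps : lam - x • 1 ∈
      convexHull ℝ {g : Fin (n + 1) → ℝ | Monotone g ∧ range g ⊆ {0, 2 * π}} := by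
    refine monotone_mem_convexHull_of_range_subset_Icc two_pi_pos.le
      (fun i j hij => by simpa using hmono hij) ?_
    rintro _ ⟨i, rfl⟩
    simp only [Pi.sub_apply, Pi.smul_apply, Pi.one_apply, smul_eq_mul, mul_one, mem_Icc,
      sub_nonneg, sub_le_iff_le_add']
    exact ⟨hmono (Fin.zero_le i), (hmono (Fin.le_last i)).trans hwrap⟩
  have hdiag : x • (1 : Fin (n + 1) → ℝ) ∈
      convexHull ℝ {(m * π) • 1, (((m + 1 : ℤ) : ℝ) * π) • 1} := by
    have hx : x ∈ segment ℝ (m * π) (((m + 1 : ℤ) : ℝ) * π) := by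
      rw [segment_eq_Icc (by gcongr; simp)]
      constructor
      · exact (le_div_iff₀ pi_pos).1 (Int.floor_le _)
      · push_cast
        exact (div_le_iff₀ pi_pos).1 (Int.lt_floor_add_one _).le
    have himage := image_segment ℝ (LinearMap.toSpanSingleton ℝ (Fin (n + 1) → ℝ) 1).toAffineMap
      (m * π) (((m + 1 : ℤ) : ℝ) * π)
    simp only [LinearMap.coe_toAffineMap, LinearMap.toSpanSingleton_apply] at himage
    rw [convexHull_pair, ← himage]
    exact mem_image_of_mem _ hx
  have := add_mem_add hsteps hdiag
  rw [← convexHull_add, sub_add_cancel] at this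
  refine convexHull_mono ?_ this
  rintro _ ⟨g, ⟨hg, hg_range⟩, _, hd, rfl⟩
  rcases hd with rfl | rfl <;> exact add_smul_one_mem_graphClosure hg hg_range _

theorem convexHull_graphClosure (n : ℕ) : convexHull ℝ (graphClosure n) = closedAlcove n :=
  (convexHull_min (graphClosure_subset_closedAlcove n) (convex_closedAlcove n)).antisymm
    (closedAlcove_subset_convexHull_graphClosure n)

theorem interior_setOf_last_le (n : ℕ) :
    interior {x : Fin (n + 1) → ℝ | x (Fin.last n) ≤ x 0 + 2 * π} =
      {x | x (Fin.last n) < x 0 + 2 * π} := by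
  rcases n with _ | n
  · have hπ := two_pi_pos
    simp only [Fin.last_zero, le_add_iff_nonneg_right, lt_add_iff_pos_right, hπ, hπ.le,
      Set.ofPred_true, interior_univ]
  · exact interior_setOf_apply_le_apply_add Fin.last_pos.ne' _

theorem interior_closedAlcove (n : ℕ) : interior (closedAlcove n) = alcove n := by
  have hC : closedAlcove n = (⋂ i, ⋂ j, ⋂ (_ : i < j), {x : Fin (n + 1) → ℝ | x i ≤ x j + 0}) ∩
      {x | x (Fin.last n) ≤ x 0 + 2 * π} := by
    ext x
    simp [closedAlcove, monotone_iff_forall_lt]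
  have hO : alcove n = (⋂ i, ⋂ j, ⋂ (_ : i < j), {x : Fin (n + 1) → ℝ | x i < x j + 0}) ∩
      {x | x (Fin.last n) < x 0 + 2 * π} := by
    ext x
    simp [alcove, StrictMono]
  rw [hC, hO, interior_inter, interior_setOf_last_le]
  simp only [interior_iInter_of_finite]
  exact congrArg (· ∩ _) <| iInter₂_congr fun i j =>
    iInter_congr fun hij => interior_setOf_apply_le_apply_add hij.ne 0

/-- The interior of the convex hull of the (closure of the) graph `G₂^k` — points `λ` with
`λ₁ ≤ ⋯ ≤ λ_k ≤ λ₁ + 2π` all but at most one of whose coordinates lie in `πℤ` — is the open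
region `{λ : λ₁ < ⋯ < λ_k < λ₁ + 2π}`. -/
theorem interior_convexHull_graph (k : ℕ) (hk : 1 ≤ k) :
    interior (convexHull ℝ
      {lam : Fin k → ℝ | Monotone lam ∧
        lam ⟨k - 1, by omega⟩ ≤ lam ⟨0, by omega⟩ + 2 * Real.pi ∧
        {i : Fin k | ¬∃ n : ℤ, lam i = n * Real.pi}.Subsingleton}) =
    {lam : Fin k → ℝ | StrictMono lam ∧
      lam ⟨k - 1, by omega⟩ < lam ⟨0, by omega⟩ + 2 * Real.pi} := by
  obtain ⟨n, rfl⟩ : ∃ n, k = n + 1 := ⟨k - 1, by omega⟩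
  change interior (convexHull ℝ (graphClosure n)) = alcove n
  rw [convexHull_graphClosure, interior_closedAlcove]
end

section
/- For all natural numbers m ≥ 1, n ≥ 0 and c with c ≤ m − 1 and c ≤ n: 2·(√(m − c) + √(n − c + 1)) · √((m − 1 − c)! · (n − c)!) ≤ 4·√((m + n)!) / c!. -/
lemma nat_key_fse (a b k : ℕ) :
    (a + b + 1) * a.factorial * b.factorial * (k.factorial * k.factorial) ≤
      (a + b + 1 + 2 * k).factorial := by
  have h1 : a.factorial * b.factorial ≤ (a + b).factorial :=
    Nat.le_of_dvd (a + b).factorial_pos (Nat.factorial_mul_factorial_dvd_factorial_add a b)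
  have h2 : k.factorial * k.factorial ≤ (2 * k).factorial := by
    have := Nat.le_of_dvd (k + k).factorial_pos
      (Nat.factorial_mul_factorial_dvd_factorial_add k k)
    simpa [two_mul] using this
  have h3 : (a + b + 1).factorial * (2 * k).factorial ≤ (a + b + 1 + 2 * k).factorial :=
    Nat.le_of_dvd (Nat.factorial_pos _) (Nat.factorial_mul_factorial_dvd_factorial_add _ _)
  calc (a + b + 1) * a.factorial * b.factorial * (k.factorial * k.factorial)
      = ((a + b + 1) * (a.factorial * b.factorial)) * (k.factorial * k.factorial) := by ring
    _ ≤ ((a + b + 1) * (a + b).factorial) * (2 * k).factorial :=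
        Nat.mul_le_mul (Nat.mul_le_mul_left _ h1) h2
    _ = (a + b + 1).factorial * (2 * k).factorial := by rw [Nat.factorial_succ]
    _ ≤ (a + b + 1 + 2 * k).factorial := h3

/-- The combinatorial estimate
`2(√(m−c) + √(n−c+1))·√((m−1−c)!·(n−c)!) ≤ 4√((m+n)!)/c!`. -/
theorem factorial_sqrt_estimate (m n c : ℕ) (hm : 1 ≤ m) (hc₁ : c ≤ m - 1) (hc₂ : c ≤ n) :
    2 * (Real.sqrt ((m : ℝ) - c) + Real.sqrt ((n : ℝ) - c + 1)) *
      Real.sqrt ((Nat.factorial (m - 1 - c) : ℝ) * (Nat.factorial (n - c) : ℝ)) ≤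
    4 * Real.sqrt (Nat.factorial (m + n)) / (Nat.factorial c : ℝ) := by
  set a := m - 1 - c with ha
  set b := n - c with hb
  have hma : (m : ℝ) - c = (a : ℝ) + 1 := by
    have h : m = a + 1 + c := by omega
    rw [h]; push_cast; ring
  have hnb : (n : ℝ) - c + 1 = (b : ℝ) + 1 := by
    have h : n = b + c := by omega
    rw [h]; push_cast; ring
  rw [hma, hnb, le_div_iff₀ (by positivity : (0 : ℝ) < (Nat.factorial c : ℝ))]
  have key : ((a + b + 1 : ℕ) : ℝ) * (Nat.factorial a : ℝ) * (Nat.factorial b : ℝ) *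
      ((Nat.factorial c : ℝ) * (Nat.factorial c : ℝ)) ≤ (Nat.factorial (m + n) : ℝ) := by
    have hmn : a + b + 1 + 2 * c = m + n := by omega
    exact_mod_cast hmn ▸ nat_key_fse a b c
  have hs : Real.sqrt ((a : ℝ) + 1) + Real.sqrt ((b : ℝ) + 1) ≤
      2 * Real.sqrt ((a : ℝ) + (b : ℝ) + 1) := by
    have hb0 : (0 : ℝ) ≤ (b : ℝ) := Nat.cast_nonneg b
    have ha0 : (0 : ℝ) ≤ (a : ℝ) := Nat.cast_nonneg a
    have h1 : Real.sqrt ((a : ℝ) + 1) ≤ Real.sqrt ((a : ℝ) + (b : ℝ) + 1) :=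
      Real.sqrt_le_sqrt (by linarith)
    have h2 : Real.sqrt ((b : ℝ) + 1) ≤ Real.sqrt ((a : ℝ) + (b : ℝ) + 1) :=
      Real.sqrt_le_sqrt (by linarith)
    linarith
  have hc0 : (0 : ℝ) ≤ (Nat.factorial c : ℝ) := by positivity
  calc 2 * (Real.sqrt ((a : ℝ) + 1) + Real.sqrt ((b : ℝ) + 1)) *
        Real.sqrt ((Nat.factorial a : ℝ) * (Nat.factorial b : ℝ)) * (Nat.factorial c : ℝ)
      ≤ 2 * (2 * Real.sqrt ((a : ℝ) + (b : ℝ) + 1)) *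
        Real.sqrt ((Nat.factorial a : ℝ) * (Nat.factorial b : ℝ)) * (Nat.factorial c : ℝ) := by
        gcongr
    _ = 4 * (Real.sqrt ((a : ℝ) + (b : ℝ) + 1) *
        Real.sqrt ((Nat.factorial a : ℝ) * (Nat.factorial b : ℝ)) *
        Real.sqrt ((Nat.factorial c : ℝ) * (Nat.factorial c : ℝ))) := by
        rw [Real.sqrt_mul_self hc0]; ring
    _ = 4 * Real.sqrt (((a : ℝ) + (b : ℝ) + 1) *
        ((Nat.factorial a : ℝ) * (Nat.factorial b : ℝ)) *
        ((Nat.factorial c : ℝ) * (Nat.factorial c : ℝ))) := by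
        rw [← Real.sqrt_mul (by positivity), ← Real.sqrt_mul (by positivity)]
    _ ≤ 4 * Real.sqrt (Nat.factorial (m + n) : ℝ) := by
        gcongr
        calc ((a : ℝ) + (b : ℝ) + 1) * ((Nat.factorial a : ℝ) * (Nat.factorial b : ℝ)) *
            ((Nat.factorial c : ℝ) * (Nat.factorial c : ℝ))
            = ((a + b + 1 : ℕ) : ℝ) * (Nat.factorial a : ℝ) * (Nat.factorial b : ℝ) *
              ((Nat.factorial c : ℝ) * (Nat.factorial c : ℝ)) := by push_cast; ring
          _ ≤ (Nat.factorial (m + n) : ℝ) := key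
end
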